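/- arXiv:2205.09494 — 2 statements merged into one kernel-verified Lean document; each statement's English description precedes it below -/
import Mathlib

section
/- Let V be a finite-dimensional inner product space, μ₁, μ₂ ∈ V, σ > 0, and let P, Q be Gaussian measures on V with densities proportional to exp(−‖x−μ₁‖²/(2σ²)) and exp(−‖x−μ₂‖²/(2σ²)). For λ ≥ 0, the (λ+1)-Rényi divergence satisfies Div_{λ+1}(P‖Q) = (λ+1)·‖μ₁−μ₂‖²/(2σ²). -/
open MeasureTheory Real
open scoped RealInnerProductSpace

/-- Rényi divergence of order `λ+1` between two isotropic Gaussians `N(μ₁,σ²)` and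
`N(μ₂,σ²)` on a finite-dimensional inner product space equals `(λ+1)‖μ₁−μ₂‖²/(2σ²)`,
where `Div_β(P‖Q) = (1/(β−1)) log ∫ p^β q^{1−β}` and `p, q` are the normalized
Gaussian densities. -/
theorem renyi_div_gaussians
    (dd : ℕ) (μ₁ μ₂ : EuclideanSpace ℝ (Fin dd)) (σ lam : ℝ)
    (hσ : 0 < σ) (hlam : 0 < lam)
    (Z : ℝ) (hZ : Z = ∫ x : EuclideanSpace ℝ (Fin dd), Real.exp (-‖x‖ ^ 2 / (2 * σ ^ 2)))
    (p q : EuclideanSpace ℝ (Fin dd) → ℝ)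
    (hp : ∀ x, p x = Z⁻¹ * Real.exp (-‖x - μ₁‖ ^ 2 / (2 * σ ^ 2)))
    (hq : ∀ x, q x = Z⁻¹ * Real.exp (-‖x - μ₂‖ ^ 2 / (2 * σ ^ 2))) :
    (1 / ((lam + 1) - 1)) *
        Real.log (∫ x, p x ^ (lam + 1) * q x ^ (1 - (lam + 1))) =
      (lam + 1) * ‖μ₁ - μ₂‖ ^ 2 / (2 * σ ^ 2) := by
  have hσ2 : (0:ℝ) < 2 * σ ^ 2 := by positivity
  have hb : (0:ℝ) < 1 / (2 * σ ^ 2) := by positivity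
  set β : ℝ := lam + 1 with hβ
  -- Z is positive
  have hZval : Z = (π / (1 / (2 * σ ^ 2))) ^ ((Module.finrank ℝ (EuclideanSpace ℝ (Fin dd))) / 2 : ℝ) := by
    rw [hZ, ← GaussianFourier.integral_rexp_neg_mul_sq_norm hb]
    congr 1 with x
    congr 1
    field_simp
  have hZpos : 0 < Z := by
    rw [hZval]
    have : (0:ℝ) < π / (1 / (2 * σ ^ 2)) := by positivity
    positivity
  have hZinv : (0:ℝ) < Z⁻¹ := inv_pos.2 hZpos
  -- exponent combination helper
  have hexp : ∀ a b : ℝ, Real.exp a ^ b = Real.exp (a * b) := fun a b => by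
    rw [Real.rpow_def_of_pos (Real.exp_pos a), Real.log_exp]
  set m : EuclideanSpace ℝ (Fin dd) := β • μ₁ + (1 - β) • μ₂ with hm
  set c : ℝ := β * (1 - β) * ‖μ₁ - μ₂‖ ^ 2 / (2 * σ ^ 2) with hc
  -- vector identity
  have key : ∀ x : EuclideanSpace ℝ (Fin dd),
      β * ‖x - μ₁‖ ^ 2 + (1 - β) * ‖x - μ₂‖ ^ 2
        = ‖x - m‖ ^ 2 + β * (1 - β) * ‖μ₁ - μ₂‖ ^ 2 := by
    intro x
    have e1 := norm_sub_sq_real x μ₁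
    have e2 := norm_sub_sq_real x μ₂
    have e3 := norm_sub_sq_real x m
    have e4 := norm_sub_sq_real μ₁ μ₂
    have hxm : ⟪x, m⟫ = β * ⟪x, μ₁⟫ + (1 - β) * ⟪x, μ₂⟫ := by
      rw [hm, inner_add_right, real_inner_smul_right, real_inner_smul_right]
    have hsm : ∀ (r : ℝ) (v : EuclideanSpace ℝ (Fin dd)), ‖r • v‖ ^ 2 = r ^ 2 * ‖v‖ ^ 2 :=
      fun r v => by rw [norm_smul, mul_pow, Real.norm_eq_abs, sq_abs]
    have hmm : ‖m‖ ^ 2 = β ^ 2 * ‖μ₁‖ ^ 2 + 2 * (β * (1 - β)) * ⟪μ₁, μ₂⟫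
        + (1 - β) ^ 2 * ‖μ₂‖ ^ 2 := by
      rw [hm, norm_add_sq_real, real_inner_smul_left, real_inner_smul_right,
        hsm, hsm]
      ring
    rw [e1, e2, e3, e4, hxm, hmm]
    ring
  -- pointwise formula for the integrand
  have point : ∀ x : EuclideanSpace ℝ (Fin dd),
      p x ^ β * q x ^ (1 - β)
        = Z⁻¹ * Real.exp (-c) * Real.exp (-‖x - m‖ ^ 2 / (2 * σ ^ 2)) := by
    intro x
    rw [hp, hq, Real.mul_rpow hZinv.le (Real.exp_pos _).le,
      Real.mul_rpow hZinv.le (Real.exp_pos _).le, hexp, hexp]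
    have hZpow : Z⁻¹ ^ β * Z⁻¹ ^ (1 - β) = Z⁻¹ := by
      rw [← Real.rpow_add hZinv]
      simp
    have hsum : -‖x - μ₁‖ ^ 2 / (2 * σ ^ 2) * β + -‖x - μ₂‖ ^ 2 / (2 * σ ^ 2) * (1 - β)
        = -c + -‖x - m‖ ^ 2 / (2 * σ ^ 2) := by
      have := key x
      rw [hc]
      field_simp
      nlinarith [key x]
    calc Z⁻¹ ^ β * Real.exp (-‖x - μ₁‖ ^ 2 / (2 * σ ^ 2) * β)
          * (Z⁻¹ ^ (1 - β) * Real.exp (-‖x - μ₂‖ ^ 2 / (2 * σ ^ 2) * (1 - β)))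
        = (Z⁻¹ ^ β * Z⁻¹ ^ (1 - β)) * Real.exp (-‖x - μ₁‖ ^ 2 / (2 * σ ^ 2) * β
            + -‖x - μ₂‖ ^ 2 / (2 * σ ^ 2) * (1 - β)) := by
          rw [Real.exp_add]; ring
      _ = Z⁻¹ * Real.exp (-c) * Real.exp (-‖x - m‖ ^ 2 / (2 * σ ^ 2)) := by
          rw [hZpow, hsum, Real.exp_add]; ring
  -- compute the integral
  have hint : (∫ x, p x ^ β * q x ^ (1 - β)) = Real.exp (-c) := by
    calc (∫ x, p x ^ β * q x ^ (1 - β))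
        = ∫ x : EuclideanSpace ℝ (Fin dd),
            Z⁻¹ * Real.exp (-c) * Real.exp (-‖x - m‖ ^ 2 / (2 * σ ^ 2)) := by
          exact integral_congr_ae (Filter.Eventually.of_forall point)
      _ = Z⁻¹ * Real.exp (-c)
            * ∫ x : EuclideanSpace ℝ (Fin dd), Real.exp (-‖x - m‖ ^ 2 / (2 * σ ^ 2)) := by
          rw [integral_const_mul]
      _ = Z⁻¹ * Real.exp (-c) * Z := by
          rw [hZ, integral_sub_right_eq_self
            (fun y : EuclideanSpace ℝ (Fin dd) => Real.exp (-‖y‖ ^ 2 / (2 * σ ^ 2))) m]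
      _ = Real.exp (-c) := by
          field_simp
  rw [hint, Real.log_exp]
  rw [hc]
  have : β - 1 = lam := by rw [hβ]; ring
  rw [this]
  field_simp
  ring
end

section
/- Let H : Dⁿ → V map datasets to a finite-dimensional inner product space V, with global sensitivity Δ_H := sup_{D∼D'} ‖H(D)−H(D')‖ over neighbouring datasets. Define the mechanism R(D) = H(D) + ξ where ξ is an isotropic Gaussian on V with variance σ² per direction. If σ² ≥ 2 log(1.25/δ)·Δ_H²/ε² with 0 < ε < 1, then R is (ε, δ)-differentially private: for all neighbouring D, D' and all measurable A ⊆ V, P(R(D) ∈ A) ≤ e^ε · P(R(D') ∈ A) + δ. -/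
open MeasureTheory Real

namespace GaussDP

variable {dd : ℕ}

local notation "E" => EuclideanSpace ℝ (Fin dd)

lemma gauss_cont (σ : ℝ) : Continuous (fun x : E => Real.exp (-‖x‖ ^ 2 / (2 * σ ^ 2))) :=
  Real.continuous_exp.comp (((continuous_norm.pow 2).neg).div_const _)

lemma dens_meas (σ C : ℝ) :
    Measurable (fun x : E => ENNReal.ofReal (C⁻¹ * Real.exp (-‖x‖ ^ 2 / (2 * σ ^ 2)))) :=
  Measurable.ennreal_ofReal (measurable_const.mul (gauss_cont σ).measurable)

lemma gauss_integrable {σ : ℝ} (hσ : 0 < σ) :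
    Integrable (fun x : E => Real.exp (-‖x‖ ^ 2 / (2 * σ ^ 2))) := by
  have hb : (0:ℝ) < (2 * σ ^ 2)⁻¹ := by positivity
  have h := (GaussianFourier.integrable_cexp_neg_mul_sq_norm_add
      (b := (((2 * σ ^ 2)⁻¹ : ℝ) : ℂ)) (by rwa [Complex.ofReal_re]) 0 (0 : E)).norm
  refine h.congr (Filter.Eventually.of_forall fun x => ?_)
  simp only []
  rw [Complex.norm_exp]
  congr 1
  rw [show -(((2 * σ ^ 2)⁻¹ : ℝ) : ℂ) * (‖x‖ : ℂ) ^ 2 + 0 * ((inner ℝ (0:E) x : ℝ) : ℂ)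
      = (((-‖x‖ ^ 2 / (2 * σ ^ 2) : ℝ)) : ℂ) by push_cast; ring]
  exact Complex.ofReal_re _

lemma gauss_C_pos {σ : ℝ} (hσ : 0 < σ) :
    0 < ∫ x : E, Real.exp (-‖x‖ ^ 2 / (2 * σ ^ 2)) := by
  rw [integral_pos_iff_support_of_nonneg (fun x => (Real.exp_pos _).le) (gauss_integrable hσ)]
  have : (Function.support fun x : E => Real.exp (-‖x‖ ^ 2 / (2 * σ ^ 2))) = Set.univ := by
    ext x; simp [Function.support, Real.exp_ne_zero]
  rw [this]
  exact isOpen_univ.measure_pos volume ⟨0, trivial⟩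

lemma inner_meas (e : E) : Measurable (fun x : E => (inner ℝ x e : ℝ)) :=
  (continuous_id.inner continuous_const).measurable

lemma hyperplane_null {e : E} (he : e ≠ 0) :
    (volume : Measure E) {x : E | (inner ℝ x e : ℝ) = 0} = 0 := by
  have hker : {x : E | (inner ℝ x e : ℝ) = 0}
      = ((LinearMap.ker ((innerSL ℝ e : E →L[ℝ] ℝ) : E →ₗ[ℝ] ℝ) : Submodule ℝ E) : Set E) := by
    ext x
    simp only [Set.mem_setOf_eq, SetLike.mem_coe, LinearMap.mem_ker,
      ContinuousLinearMap.coe_coe, innerSL_apply_apply]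
    rw [real_inner_comm]
  rw [hker]
  apply Measure.addHaar_submodule
  intro htop
  have h0 : (inner ℝ e e : ℝ) = 0 := by
    have : e ∈ LinearMap.ker ((innerSL ℝ e : E →L[ℝ] ℝ) : E →ₗ[ℝ] ℝ) := htop ▸ Submodule.mem_top
    simpa using this
  exact he (inner_self_eq_zero.mp h0)

section Nu

variable {σ C : ℝ} {ν : Measure (EuclideanSpace ℝ (Fin dd))}
  (hν : ν = volume.withDensity
      (fun x => ENNReal.ofReal (C⁻¹ * Real.exp (-‖x‖ ^ 2 / (2 * σ ^ 2)))))
include hν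

lemma nu_apply {s : Set E} (hs : MeasurableSet s) :
    ν s = ∫⁻ x in s, ENNReal.ofReal (C⁻¹ * Real.exp (-‖x‖ ^ 2 / (2 * σ ^ 2))) := by
  rw [hν, withDensity_apply _ hs]

lemma nu_null {s : Set E} (hs : volume s = 0) : ν s = 0 := by
  rw [hν]; exact withDensity_absolutelyContinuous volume _ hs

lemma nu_univ (hσ : 0 < σ) (hC : C = ∫ x : E, Real.exp (-‖x‖ ^ 2 / (2 * σ ^ 2))) :
    ν Set.univ = 1 := by
  have hCpos : 0 < C := hC ▸ gauss_C_pos hσ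
  rw [nu_apply hν MeasurableSet.univ, Measure.restrict_univ]
  rw [← ofReal_integral_eq_lintegral_ofReal
    ((gauss_integrable hσ).const_mul C⁻¹)
    (Filter.Eventually.of_forall fun x => by positivity)]
  rw [MeasureTheory.integral_const_mul, ← hC, inv_mul_cancel₀ hCpos.ne']
  exact ENNReal.ofReal_one

lemma nu_neg_preimage {s : Set E} (hs : MeasurableSet s) :
    ν ((fun x : E => -x) ⁻¹' s) = ν s := by
  have mp : MeasurePreserving (fun x : E => -x) volume volume :=
    Measure.measurePreserving_neg volume
  rw [nu_apply hν (hs.preimage measurable_neg), nu_apply hν hs]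
  rw [← mp.setLIntegral_comp_preimage hs (dens_meas σ C)]
  refine setLIntegral_congr_fun (hs.preimage measurable_neg)
    (fun x _ => ?_)
  simp

lemma nu_half_lt (hσ : 0 < σ) (hC : C = ∫ x : E, Real.exp (-‖x‖ ^ 2 / (2 * σ ^ 2)))
    {e : E} (he : ‖e‖ = 1) :
    ν {x : E | 0 < (inner ℝ x e : ℝ)} = 1/2 := by
  have he0 : e ≠ 0 := fun h => by simp [h] at he
  have hm := inner_meas (dd := dd) e
  have hslt : MeasurableSet {x : E | 0 < (inner ℝ x e : ℝ)} := measurableSet_lt measurable_const hm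
  have hneg : ν {x : E | (inner ℝ x e : ℝ) < 0} = ν {x : E | 0 < (inner ℝ x e : ℝ)} := by
    rw [← nu_neg_preimage hν hslt]
    congr 1
    ext x
    simp [inner_neg_left, neg_pos]
  have hnull : ν {x : E | (inner ℝ x e : ℝ) = 0} = 0 := nu_null hν (hyperplane_null he0)
  have hle : ν {x : E | (inner ℝ x e : ℝ) ≤ 0} = ν {x : E | 0 < (inner ℝ x e : ℝ)} := by
    apply le_antisymm
    · have : {x : E | (inner ℝ x e : ℝ) ≤ 0}
          ⊆ {x : E | (inner ℝ x e : ℝ) < 0} ∪ {x : E | (inner ℝ x e : ℝ) = 0} := by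
        intro x (hx : (inner ℝ x e : ℝ) ≤ 0); rcases lt_or_eq_of_le hx with h | h
        · exact Or.inl h
        · exact Or.inr h
      calc ν {x : E | (inner ℝ x e : ℝ) ≤ 0}
          ≤ ν ({x : E | (inner ℝ x e : ℝ) < 0} ∪ {x : E | (inner ℝ x e : ℝ) = 0}) := measure_mono this
        _ ≤ ν {x : E | (inner ℝ x e : ℝ) < 0} + ν {x : E | (inner ℝ x e : ℝ) = 0} := measure_union_le _ _
        _ = ν {x : E | 0 < (inner ℝ x e : ℝ)} := by rw [hnull, hneg, add_zero]
    · rw [← hneg]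
      exact measure_mono (fun x (hx : (inner ℝ x e : ℝ) < 0) => le_of_lt hx)
  have hcompl : ν {x : E | 0 < (inner ℝ x e : ℝ)} + ν {x : E | 0 < (inner ℝ x e : ℝ)}ᶜ
      = ν Set.univ := measure_add_measure_compl hslt
  have hcs : {x : E | 0 < (inner ℝ x e : ℝ)}ᶜ = {x : E | (inner ℝ x e : ℝ) ≤ 0} := by
    ext x; simp [not_lt]
  rw [hcs, hle, nu_univ hν hσ hC, ← two_mul] at hcompl
  exact ((ENNReal.eq_div_iff (by norm_num) (by norm_num)).mpr hcompl)

lemma nu_half_le (hσ : 0 < σ) (hC : C = ∫ x : E, Real.exp (-‖x‖ ^ 2 / (2 * σ ^ 2)))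
    {e : E} (he : ‖e‖ = 1) :
    ν {x : E | 0 ≤ (inner ℝ x e : ℝ)} = 1/2 := by
  have he0 : e ≠ 0 := fun h => by simp [h] at he
  have hnull : ν {x : E | (inner ℝ x e : ℝ) = 0} = 0 := nu_null hν (hyperplane_null he0)
  apply le_antisymm
  · have : {x : E | 0 ≤ (inner ℝ x e : ℝ)}
        ⊆ {x : E | 0 < (inner ℝ x e : ℝ)} ∪ {x : E | (inner ℝ x e : ℝ) = 0} := by
      intro x (hx : (0:ℝ) ≤ inner ℝ x e); rcases lt_or_eq_of_le hx with h | h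
      · exact Or.inl h
      · exact Or.inr h.symm
    calc ν {x : E | 0 ≤ (inner ℝ x e : ℝ)}
        ≤ ν ({x : E | 0 < (inner ℝ x e : ℝ)} ∪ {x : E | (inner ℝ x e : ℝ) = 0}) := measure_mono this
      _ ≤ ν {x : E | 0 < (inner ℝ x e : ℝ)} + ν {x : E | (inner ℝ x e : ℝ) = 0} := measure_union_le _ _
      _ = 1/2 := by rw [hnull, add_zero, nu_half_lt hν hσ hC he]
  · rw [← nu_half_lt hν hσ hC he]
    exact measure_mono (fun x (hx : (0:ℝ) < inner ℝ x e) => le_of_lt hx)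

lemma nu_tail (hσ : 0 < σ) (hC : C = ∫ x : E, Real.exp (-‖x‖ ^ 2 / (2 * σ ^ 2)))
    {e : E} (he : ‖e‖ = 1) {c : ℝ} (hc : 0 ≤ c) :
    ν {x : E | c < (inner ℝ x e : ℝ)}
      ≤ ENNReal.ofReal (Real.exp (-c ^ 2 / (2 * σ ^ 2))) * (1/2) := by
  have hCpos : 0 < C := hC ▸ gauss_C_pos hσ
  have hm := inner_meas (dd := dd) e
  have hS : MeasurableSet {x : E | c < (inner ℝ x e : ℝ)} := measurableSet_lt measurable_const hm
  have hT : MeasurableSet {x : E | 0 < (inner ℝ x e : ℝ)} := measurableSet_lt measurable_const hm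
  have hee : (inner ℝ e e : ℝ) = 1 := by
    rw [real_inner_self_eq_norm_sq, he, one_pow]
  have hpre : (fun x : E => x + -(c • e)) ⁻¹' {x : E | 0 < (inner ℝ x e : ℝ)}
      = {x : E | c < (inner ℝ x e : ℝ)} := by
    ext x
    have : (inner ℝ (x + -(c • e)) e : ℝ) = inner ℝ x e - c := by
      rw [inner_add_left, inner_neg_left, real_inner_smul_left, hee]
      ring
    simp only [Set.mem_preimage, Set.mem_setOf_eq, this, sub_pos]
  have hptwise : ∀ x ∈ {x : E | c < (inner ℝ x e : ℝ)},
      ENNReal.ofReal (C⁻¹ * Real.exp (-‖x‖ ^ 2 / (2 * σ ^ 2)))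
        ≤ ENNReal.ofReal (Real.exp (-c ^ 2 / (2 * σ ^ 2)))
            * ENNReal.ofReal (C⁻¹ * Real.exp (-‖x + -(c • e)‖ ^ 2 / (2 * σ ^ 2))) := by
    intro x hx
    have hx' : c < (inner ℝ x e : ℝ) := hx
    rw [← ENNReal.ofReal_mul (Real.exp_nonneg _)]
    apply ENNReal.ofReal_le_ofReal
    have hnorm : ‖x + -(c • e)‖ ^ 2 = ‖x‖ ^ 2 - 2 * (c * (inner ℝ x e : ℝ)) + c ^ 2 := by
      rw [← sub_eq_add_neg, norm_sub_sq_real, real_inner_smul_right, norm_smul]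
      simp [he, mul_pow, sq_abs]
    rw [mul_left_comm, ← Real.exp_add]
    apply mul_le_mul_of_nonneg_left _ (inv_nonneg.mpr hCpos.le)
    apply Real.exp_le_exp.mpr
    rw [hnorm, ← add_div]
    gcongr
    nlinarith [mul_le_mul_of_nonneg_left hx'.le hc]
  calc ν {x : E | c < (inner ℝ x e : ℝ)}
      = ∫⁻ x in {x : E | c < (inner ℝ x e : ℝ)},
          ENNReal.ofReal (C⁻¹ * Real.exp (-‖x‖ ^ 2 / (2 * σ ^ 2))) := nu_apply hν hS
    _ ≤ ∫⁻ x in {x : E | c < (inner ℝ x e : ℝ)},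
          ENNReal.ofReal (Real.exp (-c ^ 2 / (2 * σ ^ 2)))
            * ENNReal.ofReal (C⁻¹ * Real.exp (-‖x + -(c • e)‖ ^ 2 / (2 * σ ^ 2))) :=
        setLIntegral_mono (((dens_meas σ C).comp (measurable_add_const (-(c • e)))).const_mul _)
          hptwise
    _ = ENNReal.ofReal (Real.exp (-c ^ 2 / (2 * σ ^ 2)))
          * ∫⁻ x in {x : E | c < (inner ℝ x e : ℝ)},
              ENNReal.ofReal (C⁻¹ * Real.exp (-‖x + -(c • e)‖ ^ 2 / (2 * σ ^ 2))) :=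
        lintegral_const_mul _ ((dens_meas σ C).comp (measurable_add_const (-(c • e))))
    _ = ENNReal.ofReal (Real.exp (-c ^ 2 / (2 * σ ^ 2))) * ν {x : E | 0 < (inner ℝ x e : ℝ)} := by
        rw [← hpre,
          (measurePreserving_add_right (volume : Measure E) (-(c • e))).setLIntegral_comp_preimage
            hT (dens_meas σ C), ← nu_apply hν hT]
    _ = ENNReal.ofReal (Real.exp (-c ^ 2 / (2 * σ ^ 2))) * (1/2) := by
        rw [nu_half_lt hν hσ hC he]

lemma nu_strip (hσ : 0 < σ) (hC : C = ∫ x : E, Real.exp (-‖x‖ ^ 2 / (2 * σ ^ 2)))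
    {e : E} (he : ‖e‖ = 1) {z : ℝ} (hz : 0 ≤ z) :
    ENNReal.ofReal (Real.exp (-(3 * z ^ 2) / (2 * σ ^ 2)))
        * ν ({x : E | 0 ≤ (inner ℝ x e : ℝ)} ∩ {x : E | (inner ℝ x e : ℝ) < z})
      + ν ({x : E | 0 ≤ (inner ℝ x e : ℝ)} ∩ {x : E | (inner ℝ x e : ℝ) < z}) ≤ 1/2 := by
  have hCpos : 0 < C := hC ▸ gauss_C_pos hσ
  have hm := inner_meas (dd := dd) e
  set S0 : Set E := {x : E | 0 ≤ (inner ℝ x e : ℝ)} ∩ {x : E | (inner ℝ x e : ℝ) < z} with hS0def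
  set S1 : Set E := {x : E | z ≤ (inner ℝ x e : ℝ)} ∩ {x : E | (inner ℝ x e : ℝ) < 2 * z} with hS1def
  have hS0 : MeasurableSet S0 :=
    (measurableSet_le measurable_const hm).inter (measurableSet_lt hm measurable_const)
  have hS1 : MeasurableSet S1 :=
    (measurableSet_le measurable_const hm).inter (measurableSet_lt hm measurable_const)
  have hee : (inner ℝ e e : ℝ) = 1 := by
    rw [real_inner_self_eq_norm_sq, he, one_pow]
  have hpre : (fun x : E => x + z • e) ⁻¹' S1 = S0 := by
    ext x
    have h1 : (inner ℝ (x + z • e) e : ℝ) = inner ℝ x e + z := by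
      rw [inner_add_left, real_inner_smul_left, hee]; ring
    simp only [hS0def, hS1def, Set.mem_preimage, Set.mem_inter_iff, Set.mem_setOf_eq, h1]
    constructor
    · rintro ⟨h2, h3⟩; exact ⟨by linarith, by linarith⟩
    · rintro ⟨h2, h3⟩; exact ⟨by linarith, by linarith⟩
  have step1 : ENNReal.ofReal (Real.exp (-(3 * z ^ 2) / (2 * σ ^ 2))) * ν S0 ≤ ν S1 := by
    have hptwise : ∀ x ∈ S0,
        ENNReal.ofReal (Real.exp (-(3 * z ^ 2) / (2 * σ ^ 2)))
            * ENNReal.ofReal (C⁻¹ * Real.exp (-‖x‖ ^ 2 / (2 * σ ^ 2)))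
          ≤ ENNReal.ofReal (C⁻¹ * Real.exp (-‖x + z • e‖ ^ 2 / (2 * σ ^ 2))) := by
      intro x hx
      obtain ⟨hx1, hx2⟩ := hx
      have hx1' : (0:ℝ) ≤ inner ℝ x e := hx1
      have hx2' : (inner ℝ x e : ℝ) < z := hx2
      rw [← ENNReal.ofReal_mul (Real.exp_nonneg _)]
      apply ENNReal.ofReal_le_ofReal
      have hnorm : ‖x + z • e‖ ^ 2 = ‖x‖ ^ 2 + 2 * (z * (inner ℝ x e : ℝ)) + z ^ 2 := by
        rw [norm_add_sq_real, real_inner_smul_right, norm_smul]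
        simp [he, mul_pow, sq_abs]
      rw [mul_left_comm, ← Real.exp_add]
      apply mul_le_mul_of_nonneg_left _ (inv_nonneg.mpr hCpos.le)
      apply Real.exp_le_exp.mpr
      rw [hnorm, ← add_div]
      gcongr
      nlinarith [mul_le_mul_of_nonneg_left hx2'.le hz]
    calc ENNReal.ofReal (Real.exp (-(3 * z ^ 2) / (2 * σ ^ 2))) * ν S0
        = ∫⁻ x in S0, ENNReal.ofReal (Real.exp (-(3 * z ^ 2) / (2 * σ ^ 2)))
            * ENNReal.ofReal (C⁻¹ * Real.exp (-‖x‖ ^ 2 / (2 * σ ^ 2))) := by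
          rw [nu_apply hν hS0, lintegral_const_mul _ (dens_meas σ C)]
      _ ≤ ∫⁻ x in S0, ENNReal.ofReal (C⁻¹ * Real.exp (-‖x + z • e‖ ^ 2 / (2 * σ ^ 2))) :=
          setLIntegral_mono ((dens_meas σ C).comp (measurable_add_const (z • e))) hptwise
      _ = ν S1 := by
          rw [← hpre,
            (measurePreserving_add_right (volume : Measure E) (z • e)).setLIntegral_comp_preimage
              hS1 (dens_meas σ C), ← nu_apply hν hS1]
  have hdisj : Disjoint S0 S1 := by
    rw [Set.disjoint_left]
    rintro x ⟨_, (hx2 : (inner ℝ x e : ℝ) < z)⟩ ⟨(hx3 : z ≤ (inner ℝ x e : ℝ)), _⟩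
    exact absurd hx2 (not_lt.mpr hx3)
  have step2 : ν S0 + ν S1 ≤ 1/2 := by
    rw [← measure_union hdisj hS1]
    rw [← nu_half_le hν hσ hC he]
    apply measure_mono
    rintro x (⟨hx1, _⟩ | ⟨hx2, _⟩)
    · exact hx1
    · exact le_trans hz hx2
  calc ENNReal.ofReal (Real.exp (-(3 * z ^ 2) / (2 * σ ^ 2))) * ν S0 + ν S0
      ≤ ν S1 + ν S0 := by exact add_le_add_left step1 _
    _ = ν S0 + ν S1 := by rw [add_comm]
    _ ≤ 1/2 := step2

lemma nu_tail_neg (hσ : 0 < σ) (hC : C = ∫ x : E, Real.exp (-‖x‖ ^ 2 / (2 * σ ^ 2)))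
    {e : E} (he : ‖e‖ = 1) {c : ℝ} :
    ν {x : E | c < (inner ℝ x e : ℝ)}
      ≤ 1/2 + ν ({x : E | 0 ≤ (inner ℝ x e : ℝ)} ∩ {x : E | (inner ℝ x e : ℝ) < -c}) := by
  have hm := inner_meas (dd := dd) e
  have hsub : {x : E | c < (inner ℝ x e : ℝ)}
      ⊆ {x : E | 0 ≤ (inner ℝ x e : ℝ)}
        ∪ ({x : E | c < (inner ℝ x e : ℝ)} ∩ {x : E | (inner ℝ x e : ℝ) < 0}) := by
    intro x (hx : c < (inner ℝ x e : ℝ))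
    rcases le_or_gt 0 (inner ℝ x e : ℝ) with h | h
    · exact Or.inl h
    · exact Or.inr ⟨hx, h⟩
  have hmid : ν ({x : E | c < (inner ℝ x e : ℝ)} ∩ {x : E | (inner ℝ x e : ℝ) < 0})
      ≤ ν ({x : E | 0 ≤ (inner ℝ x e : ℝ)} ∩ {x : E | (inner ℝ x e : ℝ) < -c}) := by
    have hW : MeasurableSet ({x : E | 0 < (inner ℝ x e : ℝ)} ∩ {x : E | (inner ℝ x e : ℝ) < -c}) :=
      (measurableSet_lt measurable_const hm).inter (measurableSet_lt hm measurable_const)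
    have hpre : (fun x : E => -x) ⁻¹'
          ({x : E | 0 < (inner ℝ x e : ℝ)} ∩ {x : E | (inner ℝ x e : ℝ) < -c})
        = {x : E | c < (inner ℝ x e : ℝ)} ∩ {x : E | (inner ℝ x e : ℝ) < 0} := by
      ext x
      simp only [Set.mem_preimage, Set.mem_inter_iff, Set.mem_setOf_eq, inner_neg_left]
      constructor
      · rintro ⟨h1, h2⟩; exact ⟨by linarith, by linarith⟩
      · rintro ⟨h1, h2⟩; exact ⟨by linarith, by linarith⟩
    rw [← hpre, nu_neg_preimage hν hW]
    exact measure_mono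
      (Set.inter_subset_inter_left _ (fun x (hx : (0:ℝ) < inner ℝ x e) => hx.le))
  calc ν {x : E | c < (inner ℝ x e : ℝ)}
      ≤ ν {x : E | 0 ≤ (inner ℝ x e : ℝ)}
        + ν ({x : E | c < (inner ℝ x e : ℝ)} ∩ {x : E | (inner ℝ x e : ℝ) < 0}) :=
        le_trans (measure_mono hsub) (measure_union_le _ _)
    _ ≤ 1/2 + ν ({x : E | 0 ≤ (inner ℝ x e : ℝ)} ∩ {x : E | (inner ℝ x e : ℝ) < -c}) := by
        rw [nu_half_le hν hσ hC he]; exact add_le_add_right hmid _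

end Nu

lemma ofReal_half : ENNReal.ofReal (1/2 : ℝ) = 1/2 := by
  rw [ENNReal.ofReal_div_of_pos (by norm_num)]
  norm_num

end GaussDP


set_option maxHeartbeats 1000000 in
/-- Tangent space Gaussian mechanism: adding isotropic Gaussian noise of variance
`σ² ≥ 2 log(1.25/δ) Δ²/ε²` to a query `H` with sensitivity `Δ` (w.r.t. the inner
product norm) yields an `(ε,δ)`-differentially private mechanism. -/
theorem gaussian_mechanism_dp
    (Dn : Type*) (Nbr : Dn → Dn → Prop)
    (dd : ℕ) (H : Dn → EuclideanSpace ℝ (Fin dd))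
    (Δ σ ε δ : ℝ) (hε : 0 < ε) (hε1 : ε < 1) (hδ : 0 < δ) (hΔ : 0 ≤ Δ) (hσ : 0 < σ)
    (hsens : ∀ D D', Nbr D D' → ‖H D - H D'‖ ≤ Δ)
    (hvar : σ ^ 2 ≥ 2 * Real.log (1.25 / δ) * Δ ^ 2 / ε ^ 2)
    (C : ℝ) (hC : C = ∫ x : EuclideanSpace ℝ (Fin dd), Real.exp (-‖x‖ ^ 2 / (2 * σ ^ 2)))
    (ν : Measure (EuclideanSpace ℝ (Fin dd)))
    (hν : ν = volume.withDensity
      (fun x => ENNReal.ofReal (C⁻¹ * Real.exp (-‖x‖ ^ 2 / (2 * σ ^ 2))))) :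
    ∀ D D', Nbr D D' → ∀ A : Set (EuclideanSpace ℝ (Fin dd)), MeasurableSet A →
      (ν.map (fun ξ => H D + ξ)) A ≤
        ENNReal.ofReal (Real.exp ε) * (ν.map (fun ξ => H D' + ξ)) A +
          ENNReal.ofReal δ := by
  intro D D' hDD' A hA
  have hCpos : 0 < C := hC ▸ GaussDP.gauss_C_pos hσ
  have hfD : Measurable (fun ξ : EuclideanSpace ℝ (Fin dd) => H D + ξ) := measurable_const_add _
  have hfD' : Measurable (fun ξ : EuclideanSpace ℝ (Fin dd) => H D' + ξ) := measurable_const_add _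
  rw [Measure.map_apply hfD hA, Measure.map_apply hfD' hA]
  set P1 : Set (EuclideanSpace ℝ (Fin dd)) := (fun ξ => H D + ξ) ⁻¹' A with hP1
  set P2 : Set (EuclideanSpace ℝ (Fin dd)) := (fun ξ => H D' + ξ) ⁻¹' A with hP2
  have hP1m : MeasurableSet P1 := hA.preimage hfD
  have hP2m : MeasurableSet P2 := hA.preimage hfD'
  by_cases hδ1 : 1 ≤ δ
  · calc ν P1 ≤ ν Set.univ := measure_mono (Set.subset_univ _)
      _ = 1 := GaussDP.nu_univ hν hσ hC
      _ ≤ ENNReal.ofReal δ := ENNReal.one_le_ofReal.mpr hδ1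
      _ ≤ _ := le_add_self
  push_neg at hδ1
  set v : EuclideanSpace ℝ (Fin dd) := H D - H D' with hv
  set t : ℝ := σ ^ 2 * ε - ‖v‖ ^ 2 / 2 with ht
  set G : Set (EuclideanSpace ℝ (Fin dd)) := {ξ | (inner ℝ ξ v : ℝ) ≤ t} with hG
  have hvm := GaussDP.inner_meas (dd := dd) v
  have hGm : MeasurableSet G := measurableSet_le hvm measurable_const
  -- Step A : the good part
  have stepA : ν (P1 ∩ G) ≤ ENNReal.ofReal (Real.exp ε) * ν P2 := by
    have hkey : ∀ ξ ∈ P1 ∩ G,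
        ENNReal.ofReal (C⁻¹ * Real.exp (-‖ξ‖ ^ 2 / (2 * σ ^ 2)))
          ≤ ENNReal.ofReal (Real.exp ε)
              * ENNReal.ofReal (C⁻¹ * Real.exp (-‖ξ + v‖ ^ 2 / (2 * σ ^ 2))) := by
      intro ξ hξ
      have hξG : (inner ℝ ξ v : ℝ) ≤ t := hξ.2
      rw [← ENNReal.ofReal_mul (Real.exp_nonneg _)]
      apply ENNReal.ofReal_le_ofReal
      have hnorm : ‖ξ + v‖ ^ 2 = ‖ξ‖ ^ 2 + 2 * (inner ℝ ξ v : ℝ) + ‖v‖ ^ 2 := norm_add_sq_real ξ v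
      rw [mul_left_comm, ← Real.exp_add]
      apply mul_le_mul_of_nonneg_left _ (inv_nonneg.mpr hCpos.le)
      apply Real.exp_le_exp.mpr
      have hεe : ε = (2 * σ ^ 2 * ε) / (2 * σ ^ 2) := by field_simp
      rw [hεe, ← add_div]
      gcongr
      rw [hnorm]
      rw [ht] at hξG
      linarith
    have hP1eq : P1 = (fun x => x + v) ⁻¹' P2 := by
      have hiff : ∀ x : EuclideanSpace ℝ (Fin dd), H D' + (x + v) = H D + x := by
        intro x; rw [hv]; abel
      ext x
      simp only [hP1, hP2, Set.mem_preimage, hiff x]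
    calc ν (P1 ∩ G)
        = ∫⁻ ξ in P1 ∩ G, ENNReal.ofReal (C⁻¹ * Real.exp (-‖ξ‖ ^ 2 / (2 * σ ^ 2))) :=
          GaussDP.nu_apply hν (hP1m.inter hGm)
      _ ≤ ∫⁻ ξ in P1 ∩ G, ENNReal.ofReal (Real.exp ε)
              * ENNReal.ofReal (C⁻¹ * Real.exp (-‖ξ + v‖ ^ 2 / (2 * σ ^ 2))) :=
          setLIntegral_mono
            (((GaussDP.dens_meas σ C).comp (measurable_add_const v)).const_mul _) hkey
      _ = ENNReal.ofReal (Real.exp ε)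
            * ∫⁻ ξ in P1 ∩ G, ENNReal.ofReal (C⁻¹ * Real.exp (-‖ξ + v‖ ^ 2 / (2 * σ ^ 2))) :=
          lintegral_const_mul _ ((GaussDP.dens_meas σ C).comp (measurable_add_const v))
      _ ≤ ENNReal.ofReal (Real.exp ε)
            * ∫⁻ ξ in P1, ENNReal.ofReal (C⁻¹ * Real.exp (-‖ξ + v‖ ^ 2 / (2 * σ ^ 2))) :=
          mul_le_mul_right (lintegral_mono_set Set.inter_subset_left) _
      _ = ENNReal.ofReal (Real.exp ε) * ν P2 := by
          rw [hP1eq,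
            (measurePreserving_add_right (volume : Measure (EuclideanSpace ℝ (Fin dd)))
              v).setLIntegral_comp_preimage hP2m (GaussDP.dens_meas σ C),
            ← GaussDP.nu_apply hν hP2m]
  -- Step B : the bad part
  have stepB : ν Gᶜ ≤ ENNReal.ofReal δ := by
    by_cases hv0 : v = 0
    · have hGc : Gᶜ = ∅ := by
        ext ξ
        simp only [hG, Set.mem_compl_iff, Set.mem_setOf_eq, not_le, Set.mem_empty_iff_false,
          iff_false, not_lt, hv0, inner_zero_right, ht, norm_zero]
        nlinarith [mul_pos (mul_pos hσ hσ) hε]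
      rw [hGc]
      simp
    -- nontrivial direction
    have hd : 0 < ‖v‖ := norm_pos_iff.mpr hv0
    have hdΔ : ‖v‖ ≤ Δ := hsens D D' hDD'
    set d : ℝ := ‖v‖ with hdd
    set e : EuclideanSpace ℝ (Fin dd) := d⁻¹ • v with he'
    have he : ‖e‖ = 1 := by
      rw [he', norm_smul, norm_inv, Real.norm_eq_abs, abs_of_pos hd, ← hdd,
        inv_mul_cancel₀ hd.ne']
    have hGc : Gᶜ = {ξ : EuclideanSpace ℝ (Fin dd) | t / d < (inner ℝ ξ e : ℝ)} := by
      ext ξ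
      simp only [hG, Set.mem_compl_iff, Set.mem_setOf_eq, not_le, he', real_inner_smul_right]
      rw [div_lt_iff₀ hd, mul_comm (d⁻¹ * _) d, ← mul_assoc, mul_inv_cancel₀ hd.ne', one_mul]
    set L : ℝ := Real.log (1.25 / δ) with hL
    have hL5 : 1/5 ≤ L := by
      have hpos : (0:ℝ) < 1.25 / δ := by positivity
      have h := Real.log_le_sub_one_of_pos (inv_pos.mpr hpos)
      rw [Real.log_inv] at h
      have hinv : (1.25 / δ)⁻¹ = δ / 1.25 := by rw [inv_div]
      rw [hinv] at h
      have h45 : δ / 1.25 = 4 * δ / 5 := by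
        rw [show (1.25:ℝ) = 5/4 by norm_num]; ring
      rw [h45] at h
      rw [hL]
      linarith
    have h1 : 2 * L * d ^ 2 ≤ σ ^ 2 * ε ^ 2 := by
      have h2 : 2 * L * Δ ^ 2 ≤ σ ^ 2 * ε ^ 2 := by
        have := hvar
        rw [ge_iff_le, div_le_iff₀ (by positivity : (0:ℝ) < ε ^ 2)] at this
        linarith
      have hd2 : d ^ 2 ≤ Δ ^ 2 := by nlinarith
      nlinarith
    by_cases hct : 0 ≤ t
    · -- positive threshold : gaussian tail bound
      have hc : 0 ≤ t / d := div_nonneg hct hd.le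
      have htail := GaussDP.nu_tail hν hσ hC he hc
      rw [hGc]
      refine le_trans htail ?_
      rw [GaussDP.ofReal_half.symm, ← ENNReal.ofReal_mul (Real.exp_nonneg _)]
      apply ENNReal.ofReal_le_ofReal
      -- real inequality : exp(-(t/d)^2/(2σ^2)) * (1/2) ≤ δ
      have hlogid : Real.log (2 * δ) = Real.log (5/2) - L := by
        rw [hL, show (1.25 : ℝ) = 5/4 by norm_num, Real.log_div (by norm_num) hδ.ne',
          Real.log_mul two_ne_zero hδ.ne', show (5/2 : ℝ) = 2 * (5/4) by norm_num,
          Real.log_mul two_ne_zero (by norm_num)]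
        ring
      have hlog52 : (3/5 : ℝ) ≤ Real.log (5/2) := by
        have h := Real.log_le_sub_one_of_pos (show (0:ℝ) < (5/2)⁻¹ by norm_num)
        rw [Real.log_inv] at h
        norm_num at h
        linarith
      have hexpand : (t/d) ^ 2 / (2 * σ ^ 2)
          = σ ^ 2 * ε ^ 2 / (2 * d ^ 2) - ε / 2 + d ^ 2 / (8 * σ ^ 2) := by
        rw [ht]
        field_simp
        ring
      have hL' : L ≤ σ ^ 2 * ε ^ 2 / (2 * d ^ 2) := by
        rw [le_div_iff₀ (by positivity : (0:ℝ) < 2 * d ^ 2)]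
        linarith
      have hd8 : (0:ℝ) ≤ d ^ 2 / (8 * σ ^ 2) := by positivity
      have hkey2 : L - Real.log (5/2) ≤ (t/d) ^ 2 / (2 * σ ^ 2) := by
        rw [hexpand]; linarith
      have hmain : Real.exp (-(t/d) ^ 2 / (2 * σ ^ 2)) ≤ 2 * δ := by
        rw [← Real.exp_log (show (0:ℝ) < 2 * δ by positivity)]
        apply Real.exp_le_exp.mpr
        rw [hlogid, neg_div]
        linarith
      linarith
    · -- negative threshold : δ is huge
      push_neg at hct
      have hL4 : L ≤ 1/4 := by
        have hσε : σ ^ 2 * ε < d ^ 2 / 2 := by rw [ht] at hct; linarith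
        have hA : σ ^ 2 * ε ^ 2 < d ^ 2 / 2 := by
          have hm := mul_lt_mul_of_pos_right hσε hε
          nlinarith [mul_pos hd hd]
        have hB : 2 * L * d ^ 2 < d ^ 2 / 2 := lt_of_le_of_lt h1 hA
        nlinarith [mul_pos hd hd]
      have hδ916 : 15/16 ≤ δ := by
        have hpos : (0:ℝ) < 1.25 / δ := by positivity
        have hexpL : 1.25 / δ = Real.exp L := (Real.exp_log hpos).symm
        have h34 : (3/4 : ℝ) ≤ Real.exp (-(1/4)) := by
          have := Real.add_one_le_exp (-(1/4 : ℝ)); linarith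
        have hexp14 : Real.exp (1/4 : ℝ) ≤ 4/3 := by
          rw [show (1/4 : ℝ) = -(-(1/4)) by ring, Real.exp_neg]
          rw [show (4/3 : ℝ) = (3/4)⁻¹ by norm_num]
          exact inv_anti₀ (by norm_num) h34
        have hfin : 1.25 / δ ≤ 4/3 := by
          rw [hexpL]
          exact le_trans (Real.exp_le_exp.mpr hL4) hexp14
        rw [show (1.25:ℝ) = 5/4 by norm_num, div_le_iff₀ hδ] at hfin
        linarith
      set z : ℝ := -(t / d) with hz'
      have hz0 : 0 ≤ z := by
        rw [hz', neg_nonneg]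
        exact (div_nonpos_iff.mpr (Or.inr ⟨hct.le, hd.le⟩))
      have hσε2 : σ ^ 2 * ε ^ 2 ≤ σ ^ 2 * ε := by
        nlinarith [mul_nonneg (mul_nonneg hσ.le hσ.le) (mul_nonneg hε.le (sub_nonneg.mpr hε1.le))]
      have h25 : 2/5 * d ^ 2 ≤ σ ^ 2 * ε ^ 2 := by
        nlinarith [mul_nonneg (sub_nonneg.mpr hL5) (mul_pos hd hd).le]
      have hσεd : 2/5 * d ^ 2 ≤ σ ^ 2 * ε := le_trans h25 hσε2
      have hz1 : z ≤ d / 10 := by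
        have hzeq : z = (d ^ 2 / 2 - σ ^ 2 * ε) / d := by
          rw [hz', ht]; field_simp; ring
        rw [hzeq, div_le_div_iff₀ hd (by norm_num : (0:ℝ) < 10)]
        nlinarith
      have hε21 : ε ^ 2 ≤ (1:ℝ) := by nlinarith
      have hσd : (2/5) * d ^ 2 ≤ σ ^ 2 := by
        refine le_trans h25 ?_
        nlinarith [mul_nonneg (mul_nonneg hσ.le hσ.le) (sub_nonneg.mpr hε21)]
      have hq : 3 * z ^ 2 / (2 * σ ^ 2) ≤ 3/80 := by
        rw [div_le_iff₀ (by positivity : (0:ℝ) < 2 * σ ^ 2)]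
        nlinarith [mul_le_mul hz1 hz1 hz0 (by positivity : (0:ℝ) ≤ d / 10)]
      have hw : (77/80 : ℝ) ≤ Real.exp (-(3 * z ^ 2) / (2 * σ ^ 2)) := by
        have := Real.add_one_le_exp (-(3 * z ^ 2) / (2 * σ ^ 2))
        rw [neg_div] at this ⊢
        linarith
      -- strip bound
      have hstrip := GaussDP.nu_strip hν hσ hC he hz0
      set S0 := ({x : EuclideanSpace ℝ (Fin dd) | 0 ≤ (inner ℝ x e : ℝ)}
          ∩ {x : EuclideanSpace ℝ (Fin dd) | (inner ℝ x e : ℝ) < z}) with hS0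
      have hS0m : MeasurableSet S0 :=
        (measurableSet_le measurable_const (GaussDP.inner_meas e)).inter
          (measurableSet_lt (GaussDP.inner_meas e) measurable_const)
      have hS0fin : ν S0 ≠ ⊤ := by
        have : ν S0 ≤ 1 := by
          rw [← GaussDP.nu_univ hν hσ hC]
          exact measure_mono (Set.subset_univ _)
        exact ne_top_of_le_ne_top ENNReal.one_ne_top this
      set r : ℝ := (ν S0).toReal with hr
      have hr0 : 0 ≤ r := ENNReal.toReal_nonneg
      have hrS : ν S0 = ENNReal.ofReal r := (ENNReal.ofReal_toReal hS0fin).symm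
      have hstripR : Real.exp (-(3 * z ^ 2) / (2 * σ ^ 2)) * r + r ≤ 1/2 := by
        have h2 := hstrip
        rw [hrS, ← ENNReal.ofReal_mul (Real.exp_nonneg _), ← ENNReal.ofReal_add
          (mul_nonneg (Real.exp_nonneg _) hr0) hr0, ← GaussDP.ofReal_half] at h2
        exact (ENNReal.ofReal_le_ofReal_iff (by norm_num)).mp h2
      have hrbound : r ≤ δ - 1/2 := by
        nlinarith [mul_nonneg hr0 (sub_nonneg.mpr hw)]
      have htail := GaussDP.nu_tail_neg hν hσ hC he (c := t / d)
      rw [hGc]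
      refine le_trans htail ?_
      rw [← hz', ← hS0, hrS, ← GaussDP.ofReal_half,
        ← ENNReal.ofReal_add (by norm_num) hr0]
      exact ENNReal.ofReal_le_ofReal (by linarith)
  -- assemble
  calc ν P1 ≤ ν (P1 ∩ G) + ν (P1 \ G) := measure_le_inter_add_diff ν P1 G
    _ ≤ ν (P1 ∩ G) + ν Gᶜ := add_le_add_right (measure_mono (fun x hx => hx.2)) _
    _ ≤ ENNReal.ofReal (Real.exp ε) * ν P2 + ENNReal.ofReal δ := add_le_add stepA stepB
end
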